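/- (Lelieuvre formulas for the associated pseudospherical surfaces.) In the concordant Chebyshev setting with potential m, set r⁺ := r + m/κ and r⁻ := r − m/κ and assume h₁₂ ≠ 0 on U. Then on U: −(h₂₂/h₁₂)·r⁺_x + r⁺_y = (1/κ)·((−(h₂₂/h₁₂)·n_x + n_y) × n) and r⁻_x − (h₁₁/h₁₂)·r⁻_y = −(1/κ)·((n_x − (h₁₁/h₁₂)·n_y) × n); that is, D_{η⁺} r⁺ = (1/κ) D_{η⁺} n × n and D_{ξ⁻} r⁻ = −(1/κ) D_{ξ⁻} n × n, relating the pseudospherical surfaces r± to their Gauss images. -/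

import Mathlib

open scoped Matrix

noncomputable def Dx {E : Type*} [NormedAddCommGroup E] [NormedSpace ℝ E]
    (f : ℝ × ℝ → E) (p : ℝ × ℝ) : E := fderiv ℝ f p (1, 0)

noncomputable def Dy {E : Type*} [NormedAddCommGroup E] [NormedSpace ℝ E]
    (f : ℝ × ℝ → E) (p : ℝ × ℝ) : E := fderiv ℝ f p (0, 1)

/-- The unit normal `n = (r_x × r_y)/sin ω` of a Chebyshev parameterisation. -/
noncomputable def nvec (r : ℝ × ℝ → Fin 3 → ℝ) (ω : ℝ × ℝ → ℝ) (p : ℝ × ℝ) : Fin 3 → ℝ :=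
  (Real.sin (ω p))⁻¹ • (Dx r p ⨯₃ Dy r p)

/-- `h₁₁ = (r_xx·n)/sin ω`. -/
noncomputable def h11 (r : ℝ × ℝ → Fin 3 → ℝ) (ω : ℝ × ℝ → ℝ) (p : ℝ × ℝ) : ℝ :=
  (Dx (Dx r) p ⬝ᵥ nvec r ω p) / Real.sin (ω p)

/-- `h₁₂ = (r_xy·n)/sin ω`. -/
noncomputable def h12 (r : ℝ × ℝ → Fin 3 → ℝ) (ω : ℝ × ℝ → ℝ) (p : ℝ × ℝ) : ℝ :=
  (Dy (Dx r) p ⬝ᵥ nvec r ω p) / Real.sin (ω p)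

/-- `h₂₂ = (r_yy·n)/sin ω`. -/
noncomputable def h22 (r : ℝ × ℝ → Fin 3 → ℝ) (ω : ℝ × ℝ → ℝ) (p : ℝ × ℝ) : ℝ :=
  (Dy (Dy r) p ⬝ᵥ nvec r ω p) / Real.sin (ω p)

/-- The associated surface `r⁺ = r + m/κ`. -/
noncomputable def rplus (r m : ℝ × ℝ → Fin 3 → ℝ) (κ : ℝ) (p : ℝ × ℝ) : Fin 3 → ℝ :=
  r p + κ⁻¹ • m p

/-- The associated surface `r⁻ = r − m/κ`. -/
noncomputable def rminus (r m : ℝ × ℝ → Fin 3 → ℝ) (κ : ℝ) (p : ℝ × ℝ) : Fin 3 → ℝ :=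
  r p - κ⁻¹ • m p

/-! ### Auxiliary algebraic lemmas -/

lemma LLV.cross_cross_expand (a b c : Fin 3 → ℝ) :
    (a ⨯₃ b) ⨯₃ c = (a ⬝ᵥ c) • b - (b ⬝ᵥ c) • a := by
  ext i
  fin_cases i <;>
    simp [cross_apply, dotProduct, Fin.sum_univ_three] <;> ring

lemma LLV.triple_expand (a b c : Fin 3 → ℝ) :
    a ⨯₃ (b ⨯₃ c) = (a ⬝ᵥ c) • b - (a ⬝ᵥ b) • c := by
  ext i
  fin_cases i <;>
    simp [cross_apply, dotProduct, Fin.sum_univ_three] <;> ring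

lemma LLV.smul_cross (c : ℝ) (v w : Fin 3 → ℝ) : (c • v) ⨯₃ w = c • (v ⨯₃ w) := by
  ext i
  fin_cases i <;> simp [cross_apply] <;> ring

lemma LLV.cross_smul (c : ℝ) (v w : Fin 3 → ℝ) : v ⨯₃ (c • w) = c • (v ⨯₃ w) := by
  ext i
  fin_cases i <;> simp [cross_apply] <;> ring

lemma LLV.add_cross (u v w : Fin 3 → ℝ) : (u + v) ⨯₃ w = u ⨯₃ w + v ⨯₃ w := by
  ext i
  fin_cases i <;> simp [cross_apply] <;> ring

lemma LLV.sub_cross (u v w : Fin 3 → ℝ) : (u - v) ⨯₃ w = u ⨯₃ w - v ⨯₃ w := by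
  ext i
  fin_cases i <;> simp [cross_apply] <;> ring

/-- Uniqueness: vectors with equal dot products against `rx`, `ry`, `nn` coincide. -/
lemma LLV.eq_of_dots {rx ry nn u w : Fin 3 → ℝ} {s : ℝ} (hs : s ≠ 0)
    (hnn : nn ⬝ᵥ nn = 1) (hcr : rx ⨯₃ ry = s • nn)
    (h1 : u ⬝ᵥ rx = w ⬝ᵥ rx) (h2 : u ⬝ᵥ ry = w ⬝ᵥ ry) (h3 : u ⬝ᵥ nn = w ⬝ᵥ nn) :
    u = w := by
  set d := u - w with hd
  have h1' : d ⬝ᵥ rx = 0 := by simp [hd, sub_dotProduct, h1]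
  have h2' : d ⬝ᵥ ry = 0 := by simp [hd, sub_dotProduct, h2]
  have h3' : d ⬝ᵥ nn = 0 := by simp [hd, sub_dotProduct, h3]
  have h4 : d ⨯₃ (rx ⨯₃ ry) = 0 := by
    rw [LLV.triple_expand, h1', h2']; simp
  rw [hcr, LLV.cross_smul] at h4
  have h5 : d ⨯₃ nn = 0 := by
    have := (smul_eq_zero.1 h4).resolve_left hs
    exact this
  have h6 : d = 0 := by
    have := LLV.triple_expand nn d nn
    rw [h5] at this
    have hnd : nn ⬝ᵥ d = 0 := by rw [dotProduct_comm]; exact h3'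
    rw [hnn, hnd] at this
    simpa using this.symm
  exact sub_eq_zero.1 h6

/-! ### Auxiliary calculus lemmas -/

lemma LLV.contDiffOn_Dx {E : Type*} [NormedAddCommGroup E] [NormedSpace ℝ E]
    {f : ℝ × ℝ → E} {s : Set (ℝ×ℝ)} (hs : IsOpen s)
    (hf : ContDiffOn ℝ (⊤ : ℕ∞) f s) : ContDiffOn ℝ (⊤ : ℕ∞) (Dx f) s := by
  have : Dx f = (ContinuousLinearMap.apply ℝ E ((1:ℝ), (0:ℝ))) ∘ (fderiv ℝ f) := rfl
  rw [this]
  exact (ContinuousLinearMap.apply ℝ E ((1:ℝ),(0:ℝ))).contDiff.comp_contDiffOn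
    (hf.fderiv_of_isOpen hs (by simp))

lemma LLV.contDiffOn_Dy {E : Type*} [NormedAddCommGroup E] [NormedSpace ℝ E]
    {f : ℝ × ℝ → E} {s : Set (ℝ×ℝ)} (hs : IsOpen s)
    (hf : ContDiffOn ℝ (⊤ : ℕ∞) f s) : ContDiffOn ℝ (⊤ : ℕ∞) (Dy f) s := by
  have : Dy f = (ContinuousLinearMap.apply ℝ E ((0:ℝ), (1:ℝ))) ∘ (fderiv ℝ f) := rfl
  rw [this]
  exact (ContinuousLinearMap.apply ℝ E ((0:ℝ),(1:ℝ))).contDiff.comp_contDiffOn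
    (hf.fderiv_of_isOpen hs (by simp))

lemma LLV.sym2 {E : Type*} [NormedAddCommGroup E] [NormedSpace ℝ E]
    {f : ℝ × ℝ → E} {s : Set (ℝ×ℝ)} (hs : IsOpen s) (hf : ContDiffOn ℝ (⊤ : ℕ∞) f s)
    {p : ℝ×ℝ} (hp : p ∈ s) :
    Dx (Dy f) p = Dy (Dx f) p := by
  have hmem : s ∈ nhds p := hs.mem_nhds hp
  have hev : ∀ᶠ y in nhds p, HasFDerivAt f (fderiv ℝ f y) y := by
    filter_upwards [hmem] with y hy
    exact ((hf.contDiffAt (hs.mem_nhds hy)).differentiableAt (by simp)).hasFDerivAt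
  have hF : DifferentiableAt ℝ (fderiv ℝ f) p :=
    ((hf.fderiv_of_isOpen hs (m := 1) (WithTop.coe_le_coe.2 le_top)).contDiffAt hmem).differentiableAt (by simp)
  have hsym := second_derivative_symmetric_of_eventually hev hF.hasFDerivAt
  have h1 : Dx (Dy f) p = fderiv ℝ (fderiv ℝ f) p (1,0) (0,1) := by
    have h : Dy f = (ContinuousLinearMap.apply ℝ E ((0:ℝ),(1:ℝ))) ∘ (fderiv ℝ f) := rfl
    rw [Dx, h, fderiv_comp p (ContinuousLinearMap.differentiableAt _) hF]
    simp [ContinuousLinearMap.fderiv]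
  have h2 : Dy (Dx f) p = fderiv ℝ (fderiv ℝ f) p (0,1) (1,0) := by
    have h : Dx f = (ContinuousLinearMap.apply ℝ E ((1:ℝ),(0:ℝ))) ∘ (fderiv ℝ f) := rfl
    rw [Dy, h, fderiv_comp p (ContinuousLinearMap.differentiableAt _) hF]
    simp [ContinuousLinearMap.fderiv]
  rw [h1, h2, hsym]

lemma LLV.fderiv_dot {f g : ℝ×ℝ → Fin 3 → ℝ} {p : ℝ×ℝ}
    (hf : DifferentiableAt ℝ f p) (hg : DifferentiableAt ℝ g p) (v : ℝ×ℝ) :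
    fderiv ℝ (fun q => f q ⬝ᵥ g q) p v
      = (fderiv ℝ f p v) ⬝ᵥ g p + f p ⬝ᵥ (fderiv ℝ g p v) := by
  have hfi := hasFDerivAt_pi'.1 hf.hasFDerivAt
  have hgi := hasFDerivAt_pi'.1 hg.hasFDerivAt
  have h : HasFDerivAt (fun q => f q ⬝ᵥ g q)
      (∑ i, (f p i • (ContinuousLinearMap.proj i).comp (fderiv ℝ g p)
          + g p i • (ContinuousLinearMap.proj i).comp (fderiv ℝ f p))) p := by
    simp only [dotProduct]
    exact HasFDerivAt.fun_sum (fun i _ => (hfi i).fun_mul (hgi i))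
  rw [h.fderiv]
  simp [dotProduct, Finset.sum_add_distrib, mul_comm]
  ring

lemma LLV.diffAt_cross {f g : ℝ×ℝ → Fin 3 → ℝ} {p : ℝ×ℝ}
    (hf : DifferentiableAt ℝ f p) (hg : DifferentiableAt ℝ g p) :
    DifferentiableAt ℝ (fun q => f q ⨯₃ g q) p := by
  have hfi : ∀ i, DifferentiableAt ℝ (fun q => f q i) p := fun i =>
    (differentiableAt_pi.1 hf) i
  have hgi : ∀ i, DifferentiableAt ℝ (fun q => g q i) p := fun i =>
    (differentiableAt_pi.1 hg) i
  rw [show (fun q => f q ⨯₃ g q) = fun q => ![f q 1 * g q 2 - f q 2 * g q 1,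
      f q 2 * g q 0 - f q 0 * g q 2, f q 0 * g q 1 - f q 1 * g q 0] from
    funext fun q => cross_apply (f q) (g q)]
  apply differentiableAt_pi.2
  intro i
  fin_cases i <;> simp <;>
    exact (((hfi _).mul (hgi _)).sub ((hfi _).mul (hgi _)))

lemma LLV.fderiv_of_eqOn_const {c : ℝ} {f : ℝ×ℝ → ℝ} {U : Set (ℝ×ℝ)} {p : ℝ×ℝ}
    (hU : IsOpen U) (hp : p ∈ U) (h : ∀ q ∈ U, f q = c) (v : ℝ×ℝ) :
    fderiv ℝ f p v = 0 := by
  have heq : f =ᶠ[nhds p] fun _ => c :=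
    Filter.eventually_of_mem (hU.mem_nhds hp) h
  rw [heq.fderiv_eq, fderiv_const_apply]
  simp

/-- Pointwise Lelieuvre algebra: determination of `A ⨯₃ nn`. -/
lemma LLV.cross_n {rx ry A nn : Fin 3 → ℝ} {s co aa bb : ℝ} (hs : s ≠ 0)
    (h10 : rx ⨯₃ ry = s • nn) (h7 : nn ⬝ᵥ nn = 1)
    (hxx : rx ⬝ᵥ rx = 1) (hyy : ry ⬝ᵥ ry = 1) (hxy : rx ⬝ᵥ ry = co)
    (hArx : A ⬝ᵥ rx = -(aa * s)) (hAry : A ⬝ᵥ ry = -(bb * s)) (hAnn : A ⬝ᵥ nn = 0) :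
    A ⨯₃ nn = -bb • rx + aa • ry := by
  have hnndef : nn = s⁻¹ • (rx ⨯₃ ry) := by
    rw [h10, smul_smul, inv_mul_cancel₀ hs, one_smul]
  have hrxnn : rx ⬝ᵥ nn = 0 := by
    rw [hnndef, dotProduct_smul, dot_self_cross, smul_zero]
  have hrynn : ry ⬝ᵥ nn = 0 := by
    rw [hnndef, dotProduct_smul, dot_cross_self, smul_zero]
  apply LLV.eq_of_dots hs h7 h10
  · -- dot with rx
    have hnxrx : nn ⨯₃ rx = s⁻¹ • (ry - co • rx) := by
      rw [hnndef, LLV.smul_cross, LLV.cross_cross_expand, hxx,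
        dotProduct_comm ry rx, hxy, one_smul]
    have e1 : (A ⨯₃ nn) ⬝ᵥ rx = A ⬝ᵥ (nn ⨯₃ rx) := by
      rw [dotProduct_comm, triple_product_permutation]
    rw [e1, hnxrx, dotProduct_smul, dotProduct_sub,
      dotProduct_smul, hArx, hAry,
      add_dotProduct, smul_dotProduct, smul_dotProduct,
      hxx, dotProduct_comm ry rx, hxy]
    field_simp
    linear_combination (-bb + aa * co) * mul_inv_cancel₀ hs
  · -- dot with ry
    have hnxry : nn ⨯₃ ry = s⁻¹ • (co • ry - rx) := by
      rw [hnndef, LLV.smul_cross, LLV.cross_cross_expand, hyy, hxy, one_smul]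
    have e1 : (A ⨯₃ nn) ⬝ᵥ ry = A ⬝ᵥ (nn ⨯₃ ry) := by
      rw [dotProduct_comm, triple_product_permutation]
    rw [e1, hnxry, dotProduct_smul, dotProduct_sub,
      dotProduct_smul, hArx, hAry,
      add_dotProduct, smul_dotProduct, smul_dotProduct,
      hyy, hxy]
    field_simp
    linear_combination (aa - bb * co) * mul_inv_cancel₀ hs
  · -- dot with nn
    have e1 : (A ⨯₃ nn) ⬝ᵥ nn = 0 := by
      rw [dotProduct_comm]; exact dot_cross_self _ _
    rw [e1, add_dotProduct, smul_dotProduct, smul_dotProduct,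
      hrxnn, hrynn]
    simp

/-- **Lelieuvre formulas for the associated pseudospherical surfaces.**
`D_{η⁺} r⁺ = (1/κ)·(D_{η⁺} n) × n` and `D_{ξ⁻} r⁻ = −(1/κ)·(D_{ξ⁻} n) × n`, where
`D_{η⁺} = −(h₂₂/h₁₂)∂_x + ∂_y` and `D_{ξ⁻} = ∂_x − (h₁₁/h₁₂)∂_y`. -/
theorem lelieuvre_formulas
    (U : Set (ℝ × ℝ)) (hU : IsOpen U) (hUconn : IsConnected U)
    (r : ℝ × ℝ → Fin 3 → ℝ) (hr : ContDiffOn ℝ (⊤ : ℕ∞) r U)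
    (ω : ℝ × ℝ → ℝ) (hω : ContDiffOn ℝ (⊤ : ℕ∞) ω U)
    (hω0 : ∀ p ∈ U, 0 < ω p) (hωπ : ∀ p ∈ U, ω p < Real.pi)
    (hxx : ∀ p ∈ U, Dx r p ⬝ᵥ Dx r p = 1)
    (hyy : ∀ p ∈ U, Dy r p ⬝ᵥ Dy r p = 1)
    (hxy : ∀ p ∈ U, Dx r p ⬝ᵥ Dy r p = Real.cos (ω p))
    (κ : ℝ) (hκ : κ ≠ 0)
    (hconc : ∀ p ∈ U,
      h11 r ω p * h22 r ω p - (h12 r ω p) ^ 2 + κ * h12 r ω p = 0)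
    (m : ℝ × ℝ → Fin 3 → ℝ) (hm : ContDiffOn ℝ (⊤ : ℕ∞) m U)
    (hmx : ∀ p ∈ U, Dx m p = (h12 r ω p - κ) • Dx r p - h11 r ω p • Dy r p)
    (hmy : ∀ p ∈ U, Dy m p = h22 r ω p • Dx r p + (κ - h12 r ω p) • Dy r p)
    (hh12 : ∀ p ∈ U, h12 r ω p ≠ 0) :
    ∀ p ∈ U,
      (-(h22 r ω p / h12 r ω p) • Dx (rplus r m κ) p + Dy (rplus r m κ) p
        = κ⁻¹ • ((-(h22 r ω p / h12 r ω p) • Dx (nvec r ω) p + Dy (nvec r ω) p)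
            ⨯₃ nvec r ω p))
      ∧ (Dx (rminus r m κ) p - (h11 r ω p / h12 r ω p) • Dy (rminus r m κ) p
        = -(κ⁻¹ • ((Dx (nvec r ω) p - (h11 r ω p / h12 r ω p) • Dy (nvec r ω) p)
            ⨯₃ nvec r ω p))) := by
  intro p hp
  have hmem : U ∈ nhds p := hU.mem_nhds hp
  have hspos : 0 < Real.sin (ω p) :=
    Real.sin_pos_of_pos_of_lt_pi (hω0 p hp) (hωπ p hp)
  have hs : Real.sin (ω p) ≠ 0 := ne_of_gt hspos
  -- differentiability
  have hrd : DifferentiableAt ℝ r p := (hr.contDiffAt hmem).differentiableAt (by simp)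
  have hmd : DifferentiableAt ℝ m p := (hm.contDiffAt hmem).differentiableAt (by simp)
  have hωd : DifferentiableAt ℝ ω p := (hω.contDiffAt hmem).differentiableAt (by simp)
  have hDxrd : DifferentiableAt ℝ (Dx r) p :=
    ((LLV.contDiffOn_Dx hU hr).contDiffAt hmem).differentiableAt (by simp)
  have hDyrd : DifferentiableAt ℝ (Dy r) p :=
    ((LLV.contDiffOn_Dy hU hr).contDiffAt hmem).differentiableAt (by simp)
  have hnd : DifferentiableAt ℝ (nvec r ω) p := by
    have h1 : DifferentiableAt ℝ (fun q => (Real.sin (ω q))⁻¹) p :=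
      hωd.sin.inv hs
    exact h1.smul (LLV.diffAt_cross hDxrd hDyrd)
  -- algebraic identities on U
  have hnrx : ∀ q ∈ U, nvec r ω q ⬝ᵥ Dx r q = 0 := by
    intro q hq
    have h0 : (Dx r q ⨯₃ Dy r q) ⬝ᵥ Dx r q = 0 := by
      rw [dotProduct_comm]; exact dot_self_cross _ _
    rw [nvec, smul_dotProduct, h0, smul_zero]
  have hnry : ∀ q ∈ U, nvec r ω q ⬝ᵥ Dy r q = 0 := by
    intro q hq
    have h0 : (Dx r q ⨯₃ Dy r q) ⬝ᵥ Dy r q = 0 := by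
      rw [dotProduct_comm]; exact dot_cross_self _ _
    rw [nvec, smul_dotProduct, h0, smul_zero]
  have hnn1 : ∀ q ∈ U, nvec r ω q ⬝ᵥ nvec r ω q = 1 := by
    intro q hq
    have hsq : Real.sin (ω q) ≠ 0 :=
      ne_of_gt (Real.sin_pos_of_pos_of_lt_pi (hω0 q hq) (hωπ q hq))
    rw [nvec, smul_dotProduct, dotProduct_smul, cross_dot_cross,
      dotProduct_comm (Dy r q) (Dx r q), hxx q hq, hyy q hq, hxy q hq,
      smul_eq_mul, smul_eq_mul]
    have h1 := Real.sin_sq_add_cos_sq (ω q)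
    field_simp
    linear_combination -h1
  have H10 : Dx r p ⨯₃ Dy r p = Real.sin (ω p) • nvec r ω p := by
    rw [nvec, smul_smul, mul_inv_cancel₀ hs, one_smul]
  -- second fundamental form values
  have hax : nvec r ω p ⬝ᵥ Dx (Dx r) p = h11 r ω p * Real.sin (ω p) := by
    rw [dotProduct_comm, h11]; field_simp
  have hbx : nvec r ω p ⬝ᵥ Dy (Dx r) p = h12 r ω p * Real.sin (ω p) := by
    rw [dotProduct_comm, h12]; field_simp
  have hcx : nvec r ω p ⬝ᵥ Dy (Dy r) p = h22 r ω p * Real.sin (ω p) := by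
    rw [dotProduct_comm, h22]; field_simp
  -- derivatives of the constant dot products
  have H1 : Dx (nvec r ω) p ⬝ᵥ Dx r p = -(h11 r ω p * Real.sin (ω p)) := by
    have h0 := LLV.fderiv_dot hnd hDxrd (1,0)
    rw [LLV.fderiv_of_eqOn_const hU hp hnrx (1,0)] at h0
    have h0' : (0:ℝ) = Dx (nvec r ω) p ⬝ᵥ Dx r p + nvec r ω p ⬝ᵥ Dx (Dx r) p := h0
    rw [hax] at h0'
    linarith
  have H3 : Dy (nvec r ω) p ⬝ᵥ Dx r p = -(h12 r ω p * Real.sin (ω p)) := by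
    have h0 := LLV.fderiv_dot hnd hDxrd (0,1)
    rw [LLV.fderiv_of_eqOn_const hU hp hnrx (0,1)] at h0
    have h0' : (0:ℝ) = Dy (nvec r ω) p ⬝ᵥ Dx r p + nvec r ω p ⬝ᵥ Dy (Dx r) p := h0
    rw [hbx] at h0'
    linarith
  have H2 : Dx (nvec r ω) p ⬝ᵥ Dy r p = -(h12 r ω p * Real.sin (ω p)) := by
    have h0 := LLV.fderiv_dot hnd hDyrd (1,0)
    rw [LLV.fderiv_of_eqOn_const hU hp hnry (1,0)] at h0
    have h0' : (0:ℝ) = Dx (nvec r ω) p ⬝ᵥ Dy r p + nvec r ω p ⬝ᵥ Dx (Dy r) p := h0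
    rw [LLV.sym2 hU hr hp, hbx] at h0'
    linarith
  have H4 : Dy (nvec r ω) p ⬝ᵥ Dy r p = -(h22 r ω p * Real.sin (ω p)) := by
    have h0 := LLV.fderiv_dot hnd hDyrd (0,1)
    rw [LLV.fderiv_of_eqOn_const hU hp hnry (0,1)] at h0
    have h0' : (0:ℝ) = Dy (nvec r ω) p ⬝ᵥ Dy r p + nvec r ω p ⬝ᵥ Dy (Dy r) p := h0
    rw [hcx] at h0'
    linarith
  have H5 : Dx (nvec r ω) p ⬝ᵥ nvec r ω p = 0 := by
    have h0 := LLV.fderiv_dot hnd hnd (1,0)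
    rw [LLV.fderiv_of_eqOn_const hU hp hnn1 (1,0)] at h0
    have h0' : (0:ℝ) = Dx (nvec r ω) p ⬝ᵥ nvec r ω p
        + nvec r ω p ⬝ᵥ Dx (nvec r ω) p := h0
    rw [dotProduct_comm (nvec r ω p)] at h0'
    linarith
  have H6 : Dy (nvec r ω) p ⬝ᵥ nvec r ω p = 0 := by
    have h0 := LLV.fderiv_dot hnd hnd (0,1)
    rw [LLV.fderiv_of_eqOn_const hU hp hnn1 (0,1)] at h0
    have h0' : (0:ℝ) = Dy (nvec r ω) p ⬝ᵥ nvec r ω p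
        + nvec r ω p ⬝ᵥ Dy (nvec r ω) p := h0
    rw [dotProduct_comm (nvec r ω p)] at h0'
    linarith
  -- the Lelieuvre cross products
  have HA : Dx (nvec r ω) p ⨯₃ nvec r ω p
      = -(h12 r ω p) • Dx r p + h11 r ω p • Dy r p :=
    LLV.cross_n hs H10 (hnn1 p hp) (hxx p hp) (hyy p hp) (hxy p hp) H1 H2 H5
  have HB : Dy (nvec r ω) p ⨯₃ nvec r ω p
      = -(h22 r ω p) • Dx r p + h12 r ω p • Dy r p :=
    LLV.cross_n hs H10 (hnn1 p hp) (hxx p hp) (hyy p hp) (hxy p hp) H3 H4 H6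
  -- derivatives of r±
  have hPx : Dx (rplus r m κ) p = Dx r p + κ⁻¹ • Dx m p := by
    have h1 : HasFDerivAt (rplus r m κ) (fderiv ℝ r p + κ⁻¹ • fderiv ℝ m p) p :=
      hrd.hasFDerivAt.add (hmd.hasFDerivAt.const_smul κ⁻¹)
    rw [Dx, h1.fderiv]
    simp [Dx]
  have hPy : Dy (rplus r m κ) p = Dy r p + κ⁻¹ • Dy m p := by
    have h1 : HasFDerivAt (rplus r m κ) (fderiv ℝ r p + κ⁻¹ • fderiv ℝ m p) p :=
      hrd.hasFDerivAt.add (hmd.hasFDerivAt.const_smul κ⁻¹)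
    rw [Dy, h1.fderiv]
    simp [Dy]
  have hMx : Dx (rminus r m κ) p = Dx r p - κ⁻¹ • Dx m p := by
    have h1 : HasFDerivAt (rminus r m κ) (fderiv ℝ r p - κ⁻¹ • fderiv ℝ m p) p :=
      hrd.hasFDerivAt.sub (hmd.hasFDerivAt.const_smul κ⁻¹)
    rw [Dx, h1.fderiv]
    simp [Dx]
  have hMy : Dy (rminus r m κ) p = Dy r p - κ⁻¹ • Dy m p := by
    have h1 : HasFDerivAt (rminus r m κ) (fderiv ℝ r p - κ⁻¹ • fderiv ℝ m p) p :=
      hrd.hasFDerivAt.sub (hmd.hasFDerivAt.const_smul κ⁻¹)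
    rw [Dy, h1.fderiv]
    simp [Dy]
  have hb := hh12 p hp
  have hcc := hconc p hp
  constructor
  · rw [hPx, hPy, hmx p hp, hmy p hp, LLV.add_cross, LLV.smul_cross, HA, HB]
    match_scalars
    · field_simp
      ring
    · field_simp
      linear_combination 2 * hcc
  · rw [hMx, hMy, hmx p hp, hmy p hp, LLV.sub_cross, LLV.smul_cross, HA, HB]
    match_scalars
    · field_simp
      linear_combination 2 * hcc
    · field_simp
      ring
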